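/- Let E be a vector lattice over ℝ, let Y be a real vector space, let n be a positive integer, and let T : E^n → Y be an n-linear map whose restriction to (E⁺)^n is total orderization invariant. Then T is symmetric on all of E: for every permutation σ of {1,...,n} and all f_1,...,f_n ∈ E, T(f_{σ(1)},...,f_{σ(n)}) = T(f_1,...,f_n). -/

import Mathlib

/-!
Each `M_k` is a symmetric function of `x`, so total orderization invariance makes `T` symmetric
on `(E⁺)^n`. Since `T` and `T ∘ σ` are multilinear, writing one coordinate at a time as
`x = x⁺ - x⁻` extends their agreement from nonnegative vectors to all of `E^n`.
-/

open Finset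

/-- `Mk x k` is `M_{k+1}(x_1,...,x_n)` (`k : Fin n` represents the 1-indexed index `k+1`):
the supremum over all subsets `I` of `{1,...,n}` of cardinality `n + 1 - (k+1) = n - k` of
the infima `⋀_{i ∈ I} x i`. -/
def Mk {L : Type*} [Lattice L] {n : ℕ} (x : Fin n → L) (k : Fin n) : L :=
  ((univ : Finset (Fin n)).powersetCard (n - k.val)).attach.sup'
    (attach_nonempty_iff.mpr (powersetCard_nonempty.mpr (by simp)))
    fun I => I.1.inf' (card_pos.mp (by
      have h := (mem_powersetCard.mp I.2).2
      have hk := k.isLt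
      omega)) x

section Mk

variable {L : Type*} [Lattice L] {n : ℕ}

lemma inf'_le_Mk (x : Fin n → L) (k : Fin n) {I : Finset (Fin n)} (hI : #I = n - k)
    (hne : I.Nonempty) : I.inf' hne x ≤ Mk x k := by
  unfold Mk
  exact le_sup'_of_le _ (mem_attach _ ⟨I, mem_powersetCard.mpr ⟨subset_univ I, hI⟩⟩) le_rfl

lemma Mk_le (x : Fin n → L) (k : Fin n) {a : L}
    (h : ∀ I : Finset (Fin n), #I = n - k → ∀ hne : I.Nonempty, I.inf' hne x ≤ a) :
    Mk x k ≤ a :=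
  sup'_le _ _ fun I _ => h I.1 (mem_powersetCard.mp I.2).2 _

lemma Mk_comp_perm_le (x : Fin n → L) (σ : Equiv.Perm (Fin n)) (k : Fin n) :
    Mk (fun i => x (σ i)) k ≤ Mk x k :=
  Mk_le _ _ fun I hI hne => by
    change I.inf' hne (x ∘ σ) ≤ _
    rw [← inf'_image (hne.image σ)]
    exact inf'_le_Mk x k (by rwa [card_image_of_injective I σ.injective]) _

lemma Mk_comp_perm (x : Fin n → L) (σ : Equiv.Perm (Fin n)) (k : Fin n) :
    Mk (fun i => x (σ i)) k = Mk x k := by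
  refine le_antisymm (Mk_comp_perm_le x σ k) ?_
  simpa using Mk_comp_perm_le (fun i => x (σ i)) σ⁻¹ k

end Mk

namespace MultilinearMap

variable {R ι E Y : Type*} [Semiring R] [Fintype ι] [Lattice E] [AddCommGroup E]
  [AddLeftMono E] [Module R E] [AddCommGroup Y] [Module R Y]

theorem eq_zero_of_forall_nonneg (D : MultilinearMap R (fun _ : ι => E) Y)
    (hD : ∀ x : ι → E, (∀ i, 0 ≤ x i) → D x = 0) : D = 0 := by
  classical
  suffices ∀ (s : Finset ι) (x : ι → E), (∀ i ∉ s, 0 ≤ x i) → D x = 0 from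
    ext fun x => this univ x (by simp)
  intro s
  induction s using Finset.induction_on with
  | empty => exact fun x hx => hD x fun i => hx i (notMem_empty i)
  | @insert j s _ ih =>
    intro x hx
    have hupdate : ∀ c : E, 0 ≤ c → D (Function.update x j c) = 0 := fun c hc =>
      ih _ fun i hi => by
        rcases eq_or_ne i j with rfl | hij
        · simpa using hc
        · simpa [hij] using hx i (by simp [hij, hi])
    rw [← Function.update_eq_self j x, ← posPart_sub_negPart (x j), map_update_sub,
      hupdate _ (posPart_nonneg _), hupdate _ (negPart_nonneg _), sub_zero]

theorem ext_nonneg {S T : MultilinearMap R (fun _ : ι => E) Y}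
    (h : ∀ x : ι → E, (∀ i, 0 ≤ x i) → S x = T x) : S = T :=
  sub_eq_zero.mp <| eq_zero_of_forall_nonneg _ fun x hx => sub_eq_zero.mpr (h x hx)

end MultilinearMap

theorem statement13_general {E Y : Type*} [Lattice E] [AddCommGroup E] [Module ℝ E]
    [CovariantClass E E (· + ·) (· ≤ ·)]
    [AddCommGroup Y] [Module ℝ Y] {n : ℕ}
    (T : MultilinearMap ℝ (fun _ : Fin n => E) Y)
    (hT : ∀ x : Fin n → E, (∀ i, 0 ≤ x i) → T x = T (fun k => Mk x k))
    (σ : Equiv.Perm (Fin n)) (f : Fin n → E) :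
    T (fun i => f (σ i)) = T f := by
  have hsymm : T.domDomCongr σ = T := MultilinearMap.ext_nonneg fun x hx => by
    rw [MultilinearMap.domDomCongr_apply, hT _ fun i => hx (σ i), hT x hx]
    simp only [Mk_comp_perm]
  exact DFunLike.congr_fun hsymm f

/-- If `T : E^n → Y` is an `n`-linear map on a vector lattice `E` whose restriction to
`(E⁺)^n` is total orderization invariant, then `T` is symmetric on all of `E`. -/
theorem statement13 {E Y : Type*} [Lattice E] [AddCommGroup E] [Module ℝ E]
    [CovariantClass E E (· + ·) (· ≤ ·)] [PosSMulMono ℝ E]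
    [AddCommGroup Y] [Module ℝ Y] {n : ℕ} (hn : 0 < n)
    (T : MultilinearMap ℝ (fun _ : Fin n => E) Y)
    (hT : ∀ x : Fin n → E, (∀ i, 0 ≤ x i) → T x = T (fun k => Mk x k))
    (σ : Equiv.Perm (Fin n)) (f : Fin n → E) :
    T (fun i => f (σ i)) = T f :=
  statement13_general T hT σ f
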